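/- Determinant formula for the Lefschetz zeta function of a permutative squared-by-blocks map on a wedge sum: in the permutative algebraic model, with M := lcm(s₁,…,s_q), the identity ((1 − t)·ζ_f(t))^M = ∏_{j=1}^q ( ∏_{i∈Λ_j} ∏_{k=1}^N det(Id_{V_{i,k}} − t^{s_j}·B_{i,k})^{(−1)^{k+1}} )^{M/s_j} holds in ℚ[[t]], where for i ∈ Λ_j the map B_{i,k} := π_{i,k} ∘ F_k^{s_j} ∘ ι_{i,k} is the endomorphism of V_{i,k} induced by the return map f_ii^{s_j}, det(Id − t^{s_j}B_{i,k}) denotes the reverse characteristic polynomial regarded as a power series, and factors with exponent −1 denote multiplicative inverses in ℚ[[t]] (all these determinants have constant term 1, hence are invertible). -/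

import Mathlib

/-- The exponential `exp(f) = ∑_{j ≥ 0} f^j / j!` of a formal power series `f ∈ ℚ[[t]]`
(intended for series with zero constant term). -/
noncomputable def expPS (f : PowerSeries ℚ) : PowerSeries ℚ :=
  PowerSeries.mk fun n =>
    PowerSeries.coeff (R := ℚ) n (∑ j ∈ Finset.range (n + 1), (j.factorial : ℚ)⁻¹ • f ^ j)

/-- The Lefschetz zeta function `ζ(t) = exp(∑_{m ≥ 1} L(m)·t^m/m) ∈ ℚ[[t]]` of a sequence of
Lefschetz numbers `L : ℕ → ℚ`. -/
noncomputable def lefschetzZeta (L : ℕ → ℚ) : PowerSeries ℚ :=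
  expPS (PowerSeries.mk fun m => if m = 0 then 0 else L m / (m : ℚ))

/-- The reverse characteristic polynomial `det(Id − t^d·B)` of an endomorphism `B` of a
finite-dimensional ℚ-vector space, regarded as a formal power series in `ℚ[[t]]` (it is a
polynomial in `t^d`; the determinant is independent of the chosen basis). -/
noncomputable def revDet {V : Type*} [AddCommGroup V] [Module ℚ V] [FiniteDimensional ℚ V]
    (d : ℕ) (B : V →ₗ[ℚ] V) : PowerSeries ℚ :=
  Matrix.det
    ((1 : Matrix (Fin (Module.finrank ℚ V)) (Fin (Module.finrank ℚ V)) (PowerSeries ℚ)) -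
      (PowerSeries.X : PowerSeries ℚ) ^ d •
        ((LinearMap.toMatrix (Module.finBasis ℚ V) (Module.finBasis ℚ V) B).map
          (PowerSeries.C (R := ℚ))))

/-! Both sides are power series with constant term `1`, so it suffices to compare their logarithmic
derivatives `t·h'/h`. On the left this is `M·∑_{m ≥ 1} (L(f^m) - 1) t^m`. On the right, Jacobi's
formula together with the geometric series `(1 - tB)⁻¹ = ∑ tʳBʳ` gives
`t·(d/dt) log det(1 - t^d B) = -d·∑_{r ≥ 1} tr(Bʳ) t^{dr}`. Since `F_k` maps the summand of `i` into
that of `σ i`, the diagonal block of `F_k^m` at `i ∈ Λ_j` vanishes unless `s_j ∣ m`, and is then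
`B_{i,k}^{m/s_j}`; hence `tr(F_k^m) = ∑_j ∑_{i ∈ Λ_j} [s_j ∣ m]·tr(B_{i,k}^{m/s_j})`, and the two
logarithmic derivatives agree. -/

open PowerSeries

namespace PowerSeries

theorem coeff_pow_eq_zero_of_lt {R : Type*} [CommRing R] {f : R⟦X⟧} (hf : constantCoeff f = 0)
    {n j : ℕ} (h : n < j) : coeff n (f ^ j) = 0 :=
  X_pow_dvd_iff.1 (pow_dvd_pow_of_dvd (X_dvd_iff.2 hf) j) n h

/-- `e = t h'/h`, the logarithmic derivative of `h` for the Euler operator `t d/dt`, stated without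
division. -/
def HasLogDeriv {R : Type*} [CommRing R] (h e : R⟦X⟧) : Prop :=
  X * d⁄dX R h = e * h

namespace HasLogDeriv

section CommRing

variable {R : Type*} [CommRing R] {h h₁ h₂ e e₁ e₂ : R⟦X⟧}

theorem mul (H₁ : HasLogDeriv h₁ e₁) (H₂ : HasLogDeriv h₂ e₂) :
    HasLogDeriv (h₁ * h₂) (e₁ + e₂) := by
  unfold HasLogDeriv at *
  rw [Derivation.leibniz, smul_eq_mul, smul_eq_mul]
  linear_combination h₁ * H₂ + h₂ * H₁

theorem pow (H : HasLogDeriv h e) (n : ℕ) : HasLogDeriv (h ^ n) (n * e) := by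
  induction n with
  | zero => simp [HasLogDeriv]
  | succ n ih => simpa [pow_succ, add_mul] using ih.mul H

theorem prod {ι : Type*} (s : Finset ι) {h e : ι → R⟦X⟧} (H : ∀ i ∈ s, HasLogDeriv (h i) (e i)) :
    HasLogDeriv (∏ i ∈ s, h i) (∑ i ∈ s, e i) := by
  classical
  induction s using Finset.induction_on with
  | empty => simp [HasLogDeriv]
  | insert a s ha ih =>
    rw [Finset.prod_insert ha, Finset.sum_insert ha]
    exact (H a (s.mem_insert_self a)).mul (ih fun i hi => H i (Finset.mem_insert_of_mem hi))

theorem expand (H : HasLogDeriv h e) (d : ℕ) (hd : d ≠ 0) :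
    HasLogDeriv (expand d hd h) (d * expand d hd e) := by
  unfold HasLogDeriv at *
  have hX : HasSubst (X ^ d : R⟦X⟧) := HasSubst.of_constantCoeff_zero' (by simp [hd])
  have hsub := congrArg (PowerSeries.expand d hd) H
  rw [map_mul, map_mul, expand_X] at hsub
  conv_lhs =>
    rw [expand_apply, derivative_subst hX, ← expand_apply d hd, derivative_pow, derivative_X]
  obtain ⟨d, rfl⟩ := Nat.exists_eq_add_one_of_ne_zero hd
  rw [Nat.add_sub_cancel]
  linear_combination ((d + 1 : ℕ) : R⟦X⟧) * hsub

end CommRing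

section Field

variable {K : Type*} [Field K] {h e : K⟦X⟧}

theorem inv (H : HasLogDeriv h e) (h0 : constantCoeff h ≠ 0) : HasLogDeriv h⁻¹ (-e) := by
  unfold HasLogDeriv at *
  rw [derivative_inv']
  linear_combination (-h⁻¹ ^ 2) * H - e * h⁻¹ * PowerSeries.inv_mul_cancel h h0

theorem unique [CharZero K] {F G e₁ e₂ : K⟦X⟧} (hF : HasLogDeriv F e₁) (hG : HasLogDeriv G e₂)
    (he : e₁ = e₂) (hc : constantCoeff F = constantCoeff G) (h0 : constantCoeff G ≠ 0) :
    F = G := by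
  subst he
  have hD : d⁄dX K (F * G⁻¹) = d⁄dX K 1 :=
    mul_left_cancel₀ X_ne_zero (by simpa [HasLogDeriv] using hF.mul (hG.inv h0))
  have h1 : F * G⁻¹ = 1 := derivative.ext hD (by simp [hc, h0])
  calc F = F * G⁻¹ * G := by rw [mul_assoc, PowerSeries.inv_mul_cancel G h0, mul_one]
    _ = G := by rw [h1, one_mul]

end Field

end HasLogDeriv

end PowerSeries

theorem expPS_eq_subst_exp {f : ℚ⟦X⟧} (hf : constantCoeff f = 0) :
    expPS f = (exp ℚ).subst f := by
  ext n
  rw [expPS, coeff_mk, coeff_subst' (HasSubst.of_constantCoeff_zero' hf),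
    finsum_eq_sum_of_support_subset (s := Finset.range (n + 1))]
  · simp [map_sum]
  · intro j hj
    rw [Finset.coe_range, Set.mem_Iio]
    by_contra! hjn
    exact (Function.mem_support.1 hj) (by rw [coeff_pow_eq_zero_of_lt hf (by omega), smul_zero])

theorem hasLogDeriv_expPS {f : ℚ⟦X⟧} (hf : constantCoeff f = 0) :
    HasLogDeriv (expPS f) (X * d⁄dX ℚ f) := by
  rw [HasLogDeriv, expPS_eq_subst_exp hf,
    derivative_subst (HasSubst.of_constantCoeff_zero' hf), derivative_exp]
  ring

theorem constantCoeff_expPS (f : ℚ⟦X⟧) : constantCoeff (expPS f) = 1 := by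
  rw [← coeff_zero_eq_constantCoeff_apply, expPS, coeff_mk]
  simp

theorem hasLogDeriv_lefschetzZeta (L : ℕ → ℚ) :
    HasLogDeriv (lefschetzZeta L) (mk fun m => if m = 0 then 0 else L m) := by
  rw [lefschetzZeta]
  convert hasLogDeriv_expPS (f := mk fun m => if m = 0 then 0 else L m / m)
    (by simp [← coeff_zero_eq_constantCoeff_apply]) using 1
  ext (_ | m)
  · simp
  · rw [coeff_succ_X_mul, coeff_derivative]
    simp only [coeff_mk, Nat.add_eq_zero_iff, one_ne_zero, and_false, ↓reduceIte, Nat.cast_add,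
      Nat.cast_one]
    field_simp

theorem hasLogDeriv_one_sub_X {R : Type*} [CommRing R] :
    HasLogDeriv (1 - X : R⟦X⟧) (-mk fun m => if m = 0 then 0 else 1) := by
  have hmk : (mk fun m => if m = 0 then 0 else 1 : R⟦X⟧) = X * mk 1 := by
    ext (_ | m) <;> simp [coeff_succ_X_mul]
  rw [HasLogDeriv, hmk, neg_mul, mul_assoc, mk_one_mul_one_sub_eq_one]
  simp

theorem hasLogDeriv_one_sub_X_mul_lefschetzZeta (L : ℕ → ℚ) :
    HasLogDeriv ((1 - X) * lefschetzZeta L) (mk fun m => if m = 0 then 0 else L m - 1) := by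
  convert hasLogDeriv_one_sub_X.mul (hasLogDeriv_lefschetzZeta L) using 1
  ext m
  by_cases hm : m = 0
  · simp [hm]
  · simp only [coeff_mk, hm, ↓reduceIte, map_add, map_neg]
    ring

namespace Derivation

variable {R A : Type*} [CommRing R] [CommRing A] [Algebra R A] (D : Derivation R A A)

theorem leibniz_prod {ι : Type*} [DecidableEq ι] (s : Finset ι) (f : ι → A) :
    D (∏ i ∈ s, f i) = ∑ i ∈ s, (∏ j ∈ s.erase i, f j) * D (f i) := by
  induction s using Finset.induction_on with
  | empty => simp
  | insert a s ha ih =>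
    rw [Finset.prod_insert ha, Finset.sum_insert ha, Finset.erase_insert ha, leibniz, ih,
      smul_eq_mul, smul_eq_mul, Finset.mul_sum, add_comm]
    congr 1
    refine Finset.sum_congr rfl fun i hi => ?_
    rw [Finset.erase_insert_of_ne (ne_of_mem_of_not_mem hi ha).symm,
      Finset.prod_insert fun h => ha (Finset.mem_of_mem_erase h)]
    ring

theorem map_det {n : Type*} [Fintype n] [DecidableEq n] (M : Matrix n n A) :
    D M.det = (M.adjugate * M.map D).trace := by
  have hcol : ∀ j, (M.updateCol j fun i => D (M i j)).det = (M.adjugate * M.map D) j j := by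
    intro j
    rw [← Matrix.cramer_apply, Matrix.cramer_eq_adjugate_mulVec, Matrix.mulVec, Matrix.mul_apply,
      dotProduct]
    rfl
  simp_rw [Matrix.trace, Matrix.diag, ← hcol, Matrix.det_apply, map_sum, Units.smul_def,
    map_zsmul, leibniz_prod, Finset.smul_sum]
  rw [Finset.sum_comm]
  refine Finset.sum_congr rfl fun j _ => Finset.sum_congr rfl fun σ _ => ?_
  rw [← Finset.prod_erase_mul _ _ (Finset.mem_univ j)]
  congr 2
  · refine Finset.prod_congr rfl fun i hi => ?_
    rw [Matrix.updateCol_ne (Finset.ne_of_mem_erase hi)]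
  · rw [Matrix.updateCol_self]

end Derivation

namespace Matrix

variable {R : Type*} [CommRing R] {n : Type*} [Fintype n]

theorem coeff_mul_map_C_apply (N : Matrix n n R⟦X⟧) (M : Matrix n n R) (r : ℕ) (i j : n) :
    coeff r ((N * M.map C) i j) = (N.map (coeff r) * M) i j := by
  simp [mul_apply, map_sum, coeff_mul_C]

theorem coeff_map_C_mul_apply (M : Matrix n n R) (N : Matrix n n R⟦X⟧) (r : ℕ) (i j : n) :
    coeff r ((M.map C * N) i j) = (M * N.map (coeff r)) i j := by
  simp [mul_apply, map_sum, coeff_C_mul]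

variable [DecidableEq n]

noncomputable def geomSeries (M : Matrix n n R) : Matrix n n R⟦X⟧ :=
  of fun i j => mk fun r => (M ^ r) i j

theorem map_coeff_geomSeries (M : Matrix n n R) (r : ℕ) : (geomSeries M).map (coeff r) = M ^ r := by
  ext i j; simp [geomSeries]

theorem one_sub_X_smul_mul_geomSeries (M : Matrix n n R) :
    (1 - (X : R⟦X⟧) • M.map C) * geomSeries M = 1 := by
  ext i j r
  rw [sub_mul, one_mul, smul_mul_assoc, sub_apply, smul_apply, smul_eq_mul, map_sub]
  cases r with
  | zero => by_cases hij : i = j <;> simp [geomSeries, one_apply, hij]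
  | succ r =>
    rw [coeff_succ_X_mul, coeff_map_C_mul_apply, map_coeff_geomSeries, ← pow_succ']
    simp [geomSeries, one_apply, apply_ite]

theorem adjugate_one_sub_X_smul (M : Matrix n n R) :
    (1 - (X : R⟦X⟧) • M.map C).adjugate = (1 - (X : R⟦X⟧) • M.map C).det • geomSeries M := by
  calc _ = (1 - (X : R⟦X⟧) • M.map C).adjugate * ((1 - (X : R⟦X⟧) • M.map C) * geomSeries M) := by
        rw [one_sub_X_smul_mul_geomSeries, mul_one]
    _ = _ := by rw [← mul_assoc, adjugate_mul, smul_mul, one_mul]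

theorem hasLogDeriv_det_one_sub_X_smul (M : Matrix n n R) :
    HasLogDeriv (1 - (X : R⟦X⟧) • M.map C).det
      (-mk fun m => if m = 0 then 0 else (M ^ m).trace) := by
  have hD : (1 - (X : R⟦X⟧) • M.map C).map (d⁄dX R) = -M.map C := by
    ext i j
    by_cases hij : i = j <;> simp [hij]
  have htr :
      X * (geomSeries M * M.map C).trace = mk fun m => if m = 0 then 0 else (M ^ m).trace := by
    ext (_ | m)
    · simp
    · simp only [coeff_succ_X_mul, trace, diag, map_sum, coeff_mul_map_C_apply,
        map_coeff_geomSeries, ← pow_succ, coeff_mk, if_neg m.succ_ne_zero]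
  rw [HasLogDeriv, Derivation.map_det, hD, adjugate_one_sub_X_smul, smul_mul, trace_smul, mul_neg,
    trace_neg, ← htr, smul_eq_mul]
  ring

end Matrix

noncomputable def LinearMap.traceSeries {R M : Type*} [CommRing R] [AddCommGroup M] [Module R M]
    (f : Module.End R M) : R⟦X⟧ :=
  PowerSeries.mk fun m => if m = 0 then 0 else LinearMap.trace R M (f ^ m)

section RevDet

variable {V : Type*} [AddCommGroup V] [Module ℚ V] [FiniteDimensional ℚ V]

theorem revDet_eq_expand (d : ℕ) (hd : d ≠ 0) (B : Module.End ℚ V) :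
    revDet d B = expand d hd (1 - (X : ℚ⟦X⟧) •
      (LinearMap.toMatrix (Module.finBasis ℚ V) (Module.finBasis ℚ V) B).map C).det := by
  rw [revDet, AlgHom.map_det]
  congr 1
  ext i j
  by_cases hij : i = j <;> simp [hij, expand_C, expand_X]

theorem constantCoeff_revDet {d : ℕ} (hd : d ≠ 0) (B : Module.End ℚ V) :
    constantCoeff (revDet d B) = 1 := by
  rw [revDet_eq_expand d hd, constantCoeff_expand, RingHom.map_det]
  convert Matrix.det_one (n := Fin (Module.finrank ℚ V)) (R := ℚ)
  ext i j
  by_cases hij : i = j <;> simp [Matrix.one_apply, hij]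

theorem hasLogDeriv_revDet {d : ℕ} (hd : d ≠ 0) (B : Module.End ℚ V) :
    HasLogDeriv (revDet d B) (-(d * expand d hd B.traceSeries)) := by
  rw [revDet_eq_expand d hd]
  convert (Matrix.hasLogDeriv_det_one_sub_X_smul _).expand d hd using 1
  rw [map_neg, mul_neg]
  congr 3
  ext m
  simp [LinearMap.traceSeries, LinearMap.trace_eq_matrix_trace ℚ (Module.finBasis ℚ V),
    LinearMap.toMatrix_pow]

theorem hasLogDeriv_ite_revDet (k : ℕ) {d : ℕ} (hd : d ≠ 0) (B : Module.End ℚ V) :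
    HasLogDeriv (if Even k then revDet d B else (revDet d B)⁻¹)
      ((-1) ^ (k + 1) * (d * expand d hd B.traceSeries)) := by
  split_ifs with hk
  · simpa [hk.add_one.neg_one_pow] using hasLogDeriv_revDet hd B
  · simpa [(Nat.not_even_iff_odd.1 hk).add_one.neg_one_pow] using
      (hasLogDeriv_revDet hd B).inv (by simp [constantCoeff_revDet hd])

end RevDet

theorem Equiv.Perm.pow_apply_eq_self_iff_card_dvd {α : Type*} [Finite α] {σ : Equiv.Perm α}
    {Λ : Finset α} {i : α} (hΛ : ∀ i', i' ∈ Λ ↔ ∃ m : ℕ, (σ ^ m) i = i') (m : ℕ) :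
    (σ ^ m) i = i ↔ Λ.card ∣ m := by
  classical
  have hper := σ.injective.mem_periodicPts i
  have hΛ' : Λ = (Finset.range (Function.minimalPeriod σ i)).image fun n => (⇑σ)^[n] i := by
    ext i'
    simp only [hΛ, Finset.mem_image, Finset.mem_range, Equiv.Perm.iterate_eq_pow]
    constructor
    · rintro ⟨m, rfl⟩
      refine ⟨m % Function.minimalPeriod σ i,
        Nat.mod_lt _ (Function.minimalPeriod_pos_of_mem_periodicPts hper), ?_⟩
      rw [← Equiv.Perm.iterate_eq_pow, ← Equiv.Perm.iterate_eq_pow,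
        Function.iterate_mod_minimalPeriod_eq]
    · rintro ⟨m, -, rfl⟩
      exact ⟨m, rfl⟩
  rw [hΛ', Finset.card_image_of_injOn, Finset.card_range, ← Equiv.Perm.iterate_eq_pow,
    ← Function.isPeriodicPt_iff_minimalPeriod_dvd]
  · rfl
  · simpa using Function.iterate_injOn_Iio_minimalPeriod (f := σ) (x := i)

section BlockPermutation

variable {R : Type*} [CommRing R] {ι : Type*} [DecidableEq ι] {W : ι → Type*}
  [∀ i, AddCommGroup (W i)] [∀ i, Module R (W i)]

theorem LinearMap.trace_pi [Fintype ι] [∀ i, Module.Free R (W i)] [∀ i, Module.Finite R (W i)]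
    (φ : Module.End R (Π i, W i)) :
    trace R _ φ = ∑ i, trace R (W i) (proj i ∘ₗ φ ∘ₗ single R W i) := by
  have hid : (∑ i, single R W i ∘ₗ proj i : Module.End R (Π i, W i)) = 1 := lsum_single R W R
  conv_lhs => rw [← mul_one φ, ← hid, Finset.mul_sum, map_sum]
  refine Finset.sum_congr rfl fun i _ => ?_
  rw [Module.End.mul_eq_comp, ← comp_assoc, trace_comp_comm']

variable {σ : Equiv.Perm ι} {F : Module.End R (Π i, W i)} {A : ∀ i, W i →ₗ[R] W (σ i)}

theorem pow_apply_single_eq_single (hF : ∀ i v, F (Pi.single i v) = Pi.single (σ i) (A i v))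
    (m : ℕ) (i : ι) (v : W i) :
    (F ^ m) (Pi.single i v) = Pi.single ((σ ^ m) i) ((F ^ m) (Pi.single i v) ((σ ^ m) i)) := by
  induction m with
  | zero => rw [pow_zero, pow_zero, Module.End.one_apply, Equiv.Perm.one_apply, Pi.single_eq_same]
  | succ m ih =>
    rw [pow_succ' F, Module.End.mul_apply, ih, hF, pow_succ' σ, Equiv.Perm.mul_apply,
      Pi.single_eq_same]

theorem proj_comp_pow_comp_single_eq_zero
    (hF : ∀ i v, F (Pi.single i v) = Pi.single (σ i) (A i v)) {m : ℕ} {i : ι}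
    (h : (σ ^ m) i ≠ i) : LinearMap.proj i ∘ₗ (F ^ m) ∘ₗ LinearMap.single R W i = 0 := by
  ext v
  rw [LinearMap.comp_apply, LinearMap.comp_apply, LinearMap.single_apply,
    pow_apply_single_eq_single hF, LinearMap.proj_apply, Pi.single_eq_of_ne' h]
  rfl

theorem proj_comp_pow_mul_comp_single
    (hF : ∀ i v, F (Pi.single i v) = Pi.single (σ i) (A i v)) {p : ℕ} {i : ι}
    (h : (σ ^ p) i = i) (r : ℕ) :
    LinearMap.proj i ∘ₗ (F ^ (p * r)) ∘ₗ LinearMap.single R W i =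
      (LinearMap.proj i ∘ₗ (F ^ p) ∘ₗ LinearMap.single R W i) ^ r := by
  set B := LinearMap.proj i ∘ₗ (F ^ p) ∘ₗ LinearMap.single R W i
  have hB : (F ^ p) ∘ₗ LinearMap.single R W i = LinearMap.single R W i ∘ₗ B := by
    refine LinearMap.ext fun v => ?_
    have := pow_apply_single_eq_single hF p i v
    rw [h] at this
    simpa [B] using this
  suffices (F ^ (p * r)) ∘ₗ LinearMap.single R W i = LinearMap.single R W i ∘ₗ B ^ r by
    rw [this, ← LinearMap.comp_assoc, LinearMap.proj_comp_single_same, LinearMap.id_comp]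
  induction r with
  | zero => rw [Nat.mul_zero, pow_zero, pow_zero]; rfl
  | succ r ih =>
    rw [Nat.mul_succ, pow_add, Module.End.mul_eq_comp, LinearMap.comp_assoc, hB,
      ← LinearMap.comp_assoc, ih, pow_succ, Module.End.mul_eq_comp, LinearMap.comp_assoc]

theorem trace_proj_comp_pow_comp_single
    (hF : ∀ i v, F (Pi.single i v) = Pi.single (σ i) (A i v)) {p : ℕ} (hp0 : p ≠ 0) {i : ι}
    (hp : ∀ m, (σ ^ m) i = i ↔ p ∣ m) (m : ℕ) :
    LinearMap.trace R (W i) (LinearMap.proj i ∘ₗ (F ^ m) ∘ₗ LinearMap.single R W i) =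
      if p ∣ m then
        LinearMap.trace R (W i) ((LinearMap.proj i ∘ₗ (F ^ p) ∘ₗ LinearMap.single R W i) ^ (m / p))
      else 0 := by
  split_ifs with h
  · obtain ⟨r, rfl⟩ := h
    rw [proj_comp_pow_mul_comp_single hF ((hp p).2 dvd_rfl), Nat.mul_div_cancel_left r
      (Nat.pos_of_ne_zero hp0)]
  · rw [proj_comp_pow_comp_single_eq_zero hF ((hp m).not.2 h), map_zero]

theorem traceSeries_eq_sum_orbits [Fintype ι] [∀ i, Module.Free R (W i)]
    [∀ i, Module.Finite R (W i)]
    (hF : ∀ i v, F (Pi.single i v) = Pi.single (σ i) (A i v)) {κ : Type*} [Fintype κ]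
    (Λ : κ → Finset ι) (hΛorb : ∀ j, ∀ i ∈ Λ j, ∀ i', i' ∈ Λ j ↔ ∃ m : ℕ, (σ ^ m) i = i')
    (hΛcover : ∀ i, ∃ j, i ∈ Λ j) (hΛdisj : ∀ j j', j ≠ j' → Disjoint (Λ j) (Λ j'))
    (hne : ∀ j, (Λ j).card ≠ 0) :
    F.traceSeries = ∑ j, ∑ i ∈ Λ j, expand (Λ j).card (hne j)
      (LinearMap.proj i ∘ₗ (F ^ (Λ j).card) ∘ₗ LinearMap.single R W i).traceSeries := by
  classical
  have hU : (Finset.univ : Finset ι) = Finset.univ.biUnion Λ := by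
    ext i
    simpa using hΛcover i
  ext m
  simp only [map_sum, coeff_expand, LinearMap.traceSeries, coeff_mk]
  by_cases hm : m = 0
  · simp [hm]
  rw [if_neg hm, LinearMap.trace_pi, hU, Finset.sum_biUnion fun j _ j' _ h => hΛdisj j j' h]
  refine Finset.sum_congr rfl fun j _ => Finset.sum_congr rfl fun i hi => ?_
  rw [trace_proj_comp_pow_comp_single hF (hne j)
    (Equiv.Perm.pow_apply_eq_self_iff_card_dvd (hΛorb j i hi))]
  split_ifs with h h'
  · exact absurd h' (by simp [Nat.div_eq_zero_iff, hne j, Nat.le_of_dvd (Nat.pos_of_ne_zero hm) h])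
  · rfl
  · rfl

end BlockPermutation

theorem mk_sub_one_eq_sum_traceSeries {R : Type*} [CommRing R] {κ : Type*} [Fintype κ]
    {W : κ → Type*} [∀ k, AddCommGroup (W k)] [∀ k, Module R (W k)]
    (F : ∀ k, Module.End R (W k)) (c : κ → R) {L : ℕ → R}
    (hL : ∀ m, L m = 1 + ∑ k, c k * LinearMap.trace R (W k) (F k ^ m)) :
    (mk fun m => if m = 0 then 0 else L m - 1) = ∑ k, C (c k) * (F k).traceSeries := by
  ext m
  by_cases hm : m = 0 <;> simp [hm, hL, map_sum, LinearMap.traceSeries]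

theorem stmt14_general (s N q : ℕ)
    (σ : Equiv.Perm (Fin s))
    (Λ : Fin q → Finset (Fin s))
    (hΛorb : ∀ j, ∀ i ∈ Λ j, ∀ i', i' ∈ Λ j ↔ ∃ m : ℕ, (σ ^ m) i = i')
    (hΛne : ∀ j, (Λ j).Nonempty)
    (hΛcover : ∀ i, ∃ j, i ∈ Λ j)
    (hΛdisj : ∀ j j', j ≠ j' → Disjoint (Λ j) (Λ j'))
    (sVec : Fin q → ℕ) (hsVec : ∀ j, sVec j = (Λ j).card)
    (M : ℕ) (hM : M = Finset.univ.lcm sVec)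
    (V : Fin s → Fin N → Type*)
    [∀ i k, AddCommGroup (V i k)] [∀ i k, Module ℚ (V i k)]
    [∀ i k, FiniteDimensional ℚ (V i k)]
    (A : ∀ i k, V i k →ₗ[ℚ] V (σ i) k)
    (F : ∀ k, (Π i, V i k) →ₗ[ℚ] (Π i, V i k))
    (hF : ∀ k (i : Fin s) (v : V i k), F k (Pi.single i v) = Pi.single (σ i) (A i k v))
    (L : ℕ → ℚ)
    (hL : ∀ m, L m =
      1 + ∑ k : Fin N, (-1 : ℚ) ^ ((k : ℕ) + 1) *
        LinearMap.trace ℚ (Π i, V i k) ((F k) ^ m)) :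
    ((1 - PowerSeries.X) * lefschetzZeta L) ^ M =
      ∏ j : Fin q,
        (∏ i ∈ Λ j, ∏ k : Fin N,
          (if Even (k : ℕ) then
            revDet (sVec j)
              ((LinearMap.proj i) ∘ₗ ((F k) ^ (sVec j)) ∘ₗ
                (LinearMap.single ℚ (fun j' => V j' k) i))
          else
            (revDet (sVec j)
              ((LinearMap.proj i) ∘ₗ ((F k) ^ (sVec j)) ∘ₗ
                (LinearMap.single ℚ (fun j' => V j' k) i)))⁻¹)) ^ (M / sVec j) := by
  obtain rfl : sVec = fun j => (Λ j).card := funext hsVec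
  have hne : ∀ j, (Λ j).card ≠ 0 := fun j => (Finset.card_pos.2 (hΛne j)).ne'
  have hdvd : ∀ j, (Λ j).card ∣ M := fun j => hM ▸ Finset.dvd_lcm (Finset.mem_univ j)
  have hR := HasLogDeriv.prod Finset.univ fun j _ => (HasLogDeriv.prod (Λ j) fun i _ =>
    HasLogDeriv.prod Finset.univ fun (k : Fin N) _ => hasLogDeriv_ite_revDet k (hne j)
      (LinearMap.proj i ∘ₗ (F k ^ (Λ j).card) ∘ₗ LinearMap.single ℚ (fun j' => V j' k) i)).pow
      (M / (Λ j).card)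
  refine HasLogDeriv.unique ((hasLogDeriv_one_sub_X_mul_lefschetzZeta L).pow M) hR ?_ ?_ ?_
  · rw [mk_sub_one_eq_sum_traceSeries _ _ hL]
    simp_rw [traceSeries_eq_sum_orbits (hF _) Λ hΛorb hΛcover hΛdisj hne, Finset.mul_sum]
    symm
    rw [Finset.sum_comm]
    refine Finset.sum_congr rfl fun j _ => ?_
    rw [Finset.sum_comm]
    refine Finset.sum_congr rfl fun i _ => Finset.sum_congr rfl fun k _ => ?_
    have hMj : (M : ℚ⟦X⟧) = ((M / (Λ j).card : ℕ) : ℚ⟦X⟧) * (Λ j).card := by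
      rw [← Nat.cast_mul, Nat.div_mul_cancel (hdvd j)]
    rw [map_pow, map_neg, map_one, hMj]
    ring
  · simp [map_prod, apply_ite, constantCoeff_revDet (hne _), constantCoeff_expPS, lefschetzZeta]
  · simp [map_prod, apply_ite, constantCoeff_revDet (hne _)]

/-- **Determinant formula for the Lefschetz zeta function of a permutative squared-by-blocks
map on a wedge sum.**  In the permutative algebraic model (`σ` a permutation of `{1,…,s}`
with orbits `Λ 1, …, Λ q` of cardinalities `s₁,…,s_q`; `F k` the block-permutation
endomorphism of `⊕_i V i k` built from the maps `A i k : V i k → V (σ i) k`), with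
`L m = 1 + ∑_{k=1}^N (-1)^k tr(F_k^m)`, `ζ_f(t) = exp(∑_{m≥1} L(f^m) t^m/m)` and
`M = lcm(s₁,…,s_q)`, the identity
`((1 − t)·ζ_f(t))^M = ∏_{j=1}^q (∏_{i∈Λ_j} ∏_{k=1}^N det(Id − t^{s_j}·B_{i,k})^{(−1)^{k+1}})^{M/s_j}`
holds in `ℚ[[t]]`, where `B_{i,k} = π_{i,k} ∘ F_k^{s_j} ∘ ι_{i,k}` is the endomorphism of
`V i k` induced by the return map `f_ii^{s_j}` (for `i ∈ Λ_j`), and a factor with exponent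
`−1` denotes the multiplicative inverse in `ℚ[[t]]` (the homology degree of `k : Fin N` is
`(k : ℕ) + 1`, so the exponent `(−1)^{k+1}` is `+1` exactly when `(k : ℕ)` is even). -/
theorem stmt14 (s N q : ℕ) (hs : 1 ≤ s) (hN : 1 ≤ N)
    (σ : Equiv.Perm (Fin s))
    (Λ : Fin q → Finset (Fin s))
    (hΛorb : ∀ j, ∀ i ∈ Λ j, ∀ i', i' ∈ Λ j ↔ ∃ m : ℕ, (σ ^ m) i = i')
    (hΛne : ∀ j, (Λ j).Nonempty)
    (hΛcover : ∀ i, ∃ j, i ∈ Λ j)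
    (hΛdisj : ∀ j j', j ≠ j' → Disjoint (Λ j) (Λ j'))
    (sVec : Fin q → ℕ) (hsVec : ∀ j, sVec j = (Λ j).card)
    (M : ℕ) (hM : M = Finset.univ.lcm sVec)
    (V : Fin s → Fin N → Type*)
    [∀ i k, AddCommGroup (V i k)] [∀ i k, Module ℚ (V i k)]
    [∀ i k, FiniteDimensional ℚ (V i k)]
    (hdim : ∀ (k : Fin N) (i i' : Fin s), (∃ m : ℕ, (σ ^ m) i = i') →
      Module.finrank ℚ (V i k) = Module.finrank ℚ (V i' k))
    (A : ∀ i k, V i k →ₗ[ℚ] V (σ i) k)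
    (F : ∀ k, (Π i, V i k) →ₗ[ℚ] (Π i, V i k))
    (hF : ∀ k (i : Fin s) (v : V i k), F k (Pi.single i v) = Pi.single (σ i) (A i k v))
    (L : ℕ → ℚ)
    (hL : ∀ m, L m =
      1 + ∑ k : Fin N, (-1 : ℚ) ^ ((k : ℕ) + 1) *
        LinearMap.trace ℚ (Π i, V i k) ((F k) ^ m)) :
    ((1 - PowerSeries.X) * lefschetzZeta L) ^ M =
      ∏ j : Fin q,
        (∏ i ∈ Λ j, ∏ k : Fin N,
          (if Even (k : ℕ) then
            revDet (sVec j)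
              ((LinearMap.proj i) ∘ₗ ((F k) ^ (sVec j)) ∘ₗ
                (LinearMap.single ℚ (fun j' => V j' k) i))
          else
            (revDet (sVec j)
              ((LinearMap.proj i) ∘ₗ ((F k) ^ (sVec j)) ∘ₗ
                (LinearMap.single ℚ (fun j' => V j' k) i)))⁻¹)) ^ (M / sVec j) :=
  stmt14_general s N q σ Λ hΛorb hΛne hΛcover hΛdisj sVec hsVec M hM V A F hF L hL
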